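/- Let n ≥ 1, q, M, C₀ > 0, and let Ω ⊆ ℝⁿ be a bounded open set. Let A : ℝⁿ → ℝ^{n×n} have symmetric values with entries a_{ij} satisfying sup_y |a_{ij}(y)| ≤ M, and Ā a constant symmetric matrix. Suppose u : Ω → ℝ is five times continuously differentiable with −Ā:D²u = f on Ω and all partial derivatives up to order 5 bounded by M; each v^{kl} : ℝⁿ → ℝ is twice continuously differentiable with −A(y):D²v^{kl}(y) = a_{kl}(y) − ā_{kl} on ℝⁿ and sup(|v^{kl}| + |∇v^{kl}|) ≤ M; constants c_j^{kl} ∈ ℝ; each χ^{jkl} : ℝⁿ → ℝ is twice continuously differentiable with −A(y):D²χ^{jkl}(y) = (A(y)e_j)·∇v^{kl}(y) − c_j^{kl} on ℝⁿ and sup(|χ^{jkl}| + |∇χ^{jkl}|) ≤ M; h := ∑_{j,k,l} c_j^{kl} ∂³_{jkl}u. For each ε ∈ (0,1] suppose uᵋ, θᵋ, θ_χᵋ, wᵋ, zᵋ : Ω → ℝ are twice differentiable with: −A(x/ε):D²uᵋ = f, A(x/ε):D²θᵋ = 0, A(x/ε):D²θ_χᵋ = 0, −A(x/ε):D²wᵋ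 = ∑_{i,j,k,l} a_{ij}(x/ε) ∂_i v^{kl}(x/ε) ∂³_{jkl}u, and −A(x/ε):D²zᵋ = −h on Ω. Assume the uniform interior estimate: for every ε ∈ (0,1] and every twice differentiable w : Ω → ℝ extending continuously to the closure of Ω and vanishing on ∂Ω, sup_Ω(|w| + |∇w|) ≤ C₀ ‖A(·/ε):D²w‖_{L^q(Ω)}; and assume the functions uᵋ − u − ε²(∑ v^{kl}(·/ε)∂²_{kl}u + θᵋ) − 2εwᵋ and wᵋ + zᵋ − ε²(∑ χ^{jkl}(·/ε)∂³_{jkl}u + θ_χᵋ) extend continuously to the closure of Ω and vanish on ∂Ω. Then there exist C > 0 and ε₀ ∈ (0,1] such that for all ε ∈ (0,ε₀): sup_Ω ( |Eᵋ| + |∇Eᵋ| ) ≤ C ε², where Eᵋ := uᵋ − u + 2εzᵋ − ε² ∑_{k,l} v^{kl}(·/ε)∂²_{kl}u − ε²θᵋ − 2ε³θ_χᵋ. -/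

import Mathlib

open MeasureTheory

/-- The partial derivative `∂_i f` of `f : ℝⁿ → ℝ`, as the Fréchet derivative applied to the
`i`-th standard basis vector. -/
noncomputable def pd {n : ℕ} (i : Fin n) (f : (Fin n → ℝ) → ℝ) : (Fin n → ℝ) → ℝ :=
  fun x => fderiv ℝ f x (Pi.single i 1)

/-- `f` is twice differentiable on `Ω`: it is differentiable on `Ω` and so are all its first
partial derivatives. -/
def TwiceDiffOn {n : ℕ} (f : (Fin n → ℝ) → ℝ) (Ω : Set (Fin n → ℝ)) : Prop :=
  DifferentiableOn ℝ f Ω ∧ ∀ i : Fin n, DifferentiableOn ℝ (pd i f) Ω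

/-- The Euclidean norm `|∇f(x)|` of the gradient of `f` at `x`. -/
noncomputable def gradNorm {n : ℕ} (f : (Fin n → ℝ) → ℝ) (x : Fin n → ℝ) : ℝ :=
  Real.sqrt (∑ i, (pd i f x) ^ 2)

/-- The `L^q(Ω)` norm `(∫_Ω |w|^q)^{1/q}` (with respect to Lebesgue measure). -/
noncomputable def lpNorm {n : ℕ} (q : ℝ) (Ω : Set (Fin n → ℝ))
    (w : (Fin n → ℝ) → ℝ) : ℝ :=
  (∫ x in Ω, |w x| ^ q) ^ (1 / q)

/-!
Write `L_ε = A(·/ε) : D²`. The error splits as `Eᵋ = T₁ + 2ε T₂ + 2ε³ X` with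
`T₁ = uᵋ - u - ε² (V(·/ε) : D²u + θᵋ) - 2ε wᵋ`, `T₂ = wᵋ + zᵋ - ε² (χ(·/ε) : D³u + θ_χᵋ)` and
`X = χ(·/ε) : D³u`. By the two-scale product rule
`ε² L_ε[φ(·/ε) ψ] = (A : D²φ)(·/ε) ψ + 2ε (A ∇φ)(·/ε) · ∇ψ + ε² φ(·/ε) L_ε ψ`,
the corrector equations cancel every term of `L_ε T₁` below order `ε²` and every term of
`L_ε T₂` below order `ε`. Since `T₁` and `T₂` vanish on `∂Ω`, the uniform estimate bounds
`|T₁| + |∇T₁|` by `O(ε²)` and `|T₂| + |∇T₂|` by `O(ε)`, while `|X| + |∇X| = O(ε⁻¹)`.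
-/

open Finset Filter Topology

variable {n : ℕ} {Ω : Set (Fin n → ℝ)} {f g w φ : (Fin n → ℝ) → ℝ} {x : Fin n → ℝ}

section PartialDerivative

lemma pd_congr_of_eventuallyEq (h : f =ᶠ[𝓝 x] g) (i : Fin n) : pd i f x = pd i g x := by
  simp only [pd, h.fderiv_eq]

lemma pd_add (hf : DifferentiableAt ℝ f x) (hg : DifferentiableAt ℝ g x) (i : Fin n) :
    pd i (fun y => f y + g y) x = pd i f x + pd i g x := by
  simp [pd, fderiv_fun_add hf hg]

lemma pd_sub (hf : DifferentiableAt ℝ f x) (hg : DifferentiableAt ℝ g x) (i : Fin n) :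
    pd i (fun y => f y - g y) x = pd i f x - pd i g x := by
  simp [pd, fderiv_fun_sub hf hg]

lemma pd_const_mul (hf : DifferentiableAt ℝ f x) (c : ℝ) (i : Fin n) :
    pd i (fun y => c * f y) x = c * pd i f x := by
  simp [pd, fderiv_const_mul hf c]

lemma pd_mul (hf : DifferentiableAt ℝ f x) (hg : DifferentiableAt ℝ g x) (i : Fin n) :
    pd i (fun y => f y * g y) x = pd i f x * g x + f x * pd i g x := by
  simp only [pd, fderiv_fun_mul hf hg, add_apply, smul_apply, smul_eq_mul]
  ring

lemma pd_sum {ι : Type*} [Fintype ι] {F : ι → (Fin n → ℝ) → ℝ}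
    (hF : ∀ p, DifferentiableAt ℝ (F p) x) (i : Fin n) :
    pd i (fun y => ∑ p, F p y) x = ∑ p, pd i (F p) x := by
  simp [pd, fderiv_fun_sum fun p _ => hF p]

lemma pd_comp_smul (c : ℝ) (i : Fin n) : pd i (fun y => w (c • y)) x = c * pd i w (c • x) := by
  simp [pd, fderiv_comp_smul (f := w) c]

lemma pd_mul_comp_smul {c : ℝ} (hw : DifferentiableAt ℝ w (c • x))
    (hφ : DifferentiableAt ℝ φ x) (i : Fin n) :
    pd i (fun y => w (c • y) * φ y) x = c * pd i w (c • x) * φ x + w (c • x) * pd i φ x := by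
  have hwc : DifferentiableAt ℝ (fun y => w (c • y)) x :=
    hw.comp x (differentiableAt_id.const_smul c)
  rw [pd_mul hwc hφ, pd_comp_smul]

lemma ContDiff.pd {m : ℕ} (hf : ContDiff ℝ (m + 1 : ℕ) f) (i : Fin n) : ContDiff ℝ m (pd i f) :=
  (hf.fderiv_right (by norm_cast)).clm_apply contDiff_const

lemma ContDiffOn.pd {m : ℕ} (hΩ : IsOpen Ω) (hf : ContDiffOn ℝ (m + 1 : ℕ) f Ω) (i : Fin n) :
    ContDiffOn ℝ m (pd i f) Ω :=
  (hf.fderiv_of_isOpen hΩ (by norm_cast)).clm_apply contDiffOn_const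

end PartialDerivative

section TwiceDiff

lemma TwiceDiffOn.differentiableAt (hf : TwiceDiffOn f Ω) (hΩ : IsOpen Ω) (hx : x ∈ Ω) :
    DifferentiableAt ℝ f x :=
  hf.1.differentiableAt (hΩ.mem_nhds hx)

lemma TwiceDiffOn.differentiableAt_pd (hf : TwiceDiffOn f Ω) (hΩ : IsOpen Ω) (hx : x ∈ Ω)
    (i : Fin n) : DifferentiableAt ℝ (pd i f) x :=
  (hf.2 i).differentiableAt (hΩ.mem_nhds hx)

lemma ContDiffOn.twiceDiffOn (hf : ContDiffOn ℝ 2 f Ω) (hΩ : IsOpen Ω) : TwiceDiffOn f Ω :=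
  ⟨hf.differentiableOn (by norm_num), fun i => (hf.pd (m := 1) hΩ i).differentiableOn one_ne_zero⟩

lemma pd_pd_of_eqOn {F G : (Fin n → ℝ) → ℝ} (hΩ : IsOpen Ω) {j : Fin n}
    (h : Set.EqOn (pd j F) G Ω) (hx : x ∈ Ω) (i : Fin n) : pd i (pd j F) x = pd i G x :=
  pd_congr_of_eventuallyEq (eventuallyEq_of_mem (hΩ.mem_nhds hx) h) i

lemma TwiceDiffOn.add (hf : TwiceDiffOn f Ω) (hg : TwiceDiffOn g Ω) (hΩ : IsOpen Ω) :
    TwiceDiffOn (fun y => f y + g y) Ω :=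
  ⟨hf.1.add hg.1, fun i => ((hf.2 i).add (hg.2 i)).congr fun _ hy =>
    pd_add (hf.differentiableAt hΩ hy) (hg.differentiableAt hΩ hy) i⟩

lemma TwiceDiffOn.sub (hf : TwiceDiffOn f Ω) (hg : TwiceDiffOn g Ω) (hΩ : IsOpen Ω) :
    TwiceDiffOn (fun y => f y - g y) Ω :=
  ⟨hf.1.sub hg.1, fun i => ((hf.2 i).sub (hg.2 i)).congr fun _ hy =>
    pd_sub (hf.differentiableAt hΩ hy) (hg.differentiableAt hΩ hy) i⟩

lemma TwiceDiffOn.const_mul (hf : TwiceDiffOn f Ω) (hΩ : IsOpen Ω) (c : ℝ) :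
    TwiceDiffOn (fun y => c * f y) Ω :=
  ⟨hf.1.const_mul c, fun i => ((hf.2 i).const_mul c).congr fun _ hy =>
    pd_const_mul (hf.differentiableAt hΩ hy) c i⟩

lemma TwiceDiffOn.sum {ι : Type*} [Fintype ι] {F : ι → (Fin n → ℝ) → ℝ}
    (hF : ∀ p, TwiceDiffOn (F p) Ω) (hΩ : IsOpen Ω) : TwiceDiffOn (fun y => ∑ p, F p y) Ω :=
  ⟨DifferentiableOn.fun_sum fun p _ => (hF p).1, fun i =>
    (DifferentiableOn.fun_sum fun p _ => (hF p).2 i).congr fun _ hy =>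
      pd_sum (fun p => (hF p).differentiableAt hΩ hy) i⟩

lemma pd_pd_add (hf : TwiceDiffOn f Ω) (hg : TwiceDiffOn g Ω) (hΩ : IsOpen Ω) (hx : x ∈ Ω)
    (i j : Fin n) : pd i (pd j (fun y => f y + g y)) x = pd i (pd j f) x + pd i (pd j g) x := by
  rw [pd_pd_of_eqOn hΩ (fun y hy => pd_add (hf.differentiableAt hΩ hy)
    (hg.differentiableAt hΩ hy) j) hx, pd_add (hf.differentiableAt_pd hΩ hx j)
    (hg.differentiableAt_pd hΩ hx j)]

lemma pd_pd_sub (hf : TwiceDiffOn f Ω) (hg : TwiceDiffOn g Ω) (hΩ : IsOpen Ω) (hx : x ∈ Ω)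
    (i j : Fin n) : pd i (pd j (fun y => f y - g y)) x = pd i (pd j f) x - pd i (pd j g) x := by
  rw [pd_pd_of_eqOn hΩ (fun y hy => pd_sub (hf.differentiableAt hΩ hy)
    (hg.differentiableAt hΩ hy) j) hx, pd_sub (hf.differentiableAt_pd hΩ hx j)
    (hg.differentiableAt_pd hΩ hx j)]

lemma pd_pd_const_mul (hf : TwiceDiffOn f Ω) (hΩ : IsOpen Ω) (hx : x ∈ Ω) (c : ℝ)
    (i j : Fin n) : pd i (pd j (fun y => c * f y)) x = c * pd i (pd j f) x := by
  rw [pd_pd_of_eqOn hΩ (fun y hy => pd_const_mul (hf.differentiableAt hΩ hy) c j) hx,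
    pd_const_mul (hf.differentiableAt_pd hΩ hx j)]

lemma pd_pd_sum {ι : Type*} [Fintype ι] {F : ι → (Fin n → ℝ) → ℝ}
    (hF : ∀ p, TwiceDiffOn (F p) Ω) (hΩ : IsOpen Ω) (hx : x ∈ Ω) (i j : Fin n) :
    pd i (pd j (fun y => ∑ p, F p y)) x = ∑ p, pd i (pd j (F p)) x := by
  rw [pd_pd_of_eqOn hΩ (fun y hy => pd_sum (fun p => (hF p).differentiableAt hΩ hy) j) hx,
    pd_sum fun p => (hF p).differentiableAt_pd hΩ hx j]

end TwiceDiff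

section HessContract

noncomputable def hessContract (a : Fin n → Fin n → ℝ) (f : (Fin n → ℝ) → ℝ)
    (x : Fin n → ℝ) : ℝ :=
  ∑ i, ∑ j, a i j * pd i (pd j f) x

variable (a : Fin n → Fin n → ℝ)

lemma hessContract_add (hf : TwiceDiffOn f Ω) (hg : TwiceDiffOn g Ω) (hΩ : IsOpen Ω)
    (hx : x ∈ Ω) :
    hessContract a (fun y => f y + g y) x = hessContract a f x + hessContract a g x := by
  simp only [hessContract, pd_pd_add hf hg hΩ hx, mul_add, sum_add_distrib]

lemma hessContract_sub (hf : TwiceDiffOn f Ω) (hg : TwiceDiffOn g Ω) (hΩ : IsOpen Ω)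
    (hx : x ∈ Ω) :
    hessContract a (fun y => f y - g y) x = hessContract a f x - hessContract a g x := by
  simp only [hessContract, pd_pd_sub hf hg hΩ hx, mul_sub, sum_sub_distrib]

lemma hessContract_const_mul (hf : TwiceDiffOn f Ω) (hΩ : IsOpen Ω) (hx : x ∈ Ω) (c : ℝ) :
    hessContract a (fun y => c * f y) x = c * hessContract a f x := by
  simp only [hessContract, pd_pd_const_mul hf hΩ hx, mul_sum, mul_left_comm]

lemma hessContract_sum {ι : Type*} [Fintype ι] {F : ι → (Fin n → ℝ) → ℝ}
    (hF : ∀ p, TwiceDiffOn (F p) Ω) (hΩ : IsOpen Ω) (hx : x ∈ Ω) :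
    hessContract a (fun y => ∑ p, F p y) x = ∑ p, hessContract a (F p) x := by
  simp only [hessContract, pd_pd_sum hF hΩ hx, mul_sum]
  exact (sum_congr rfl fun _ _ => sum_comm).trans sum_comm

end HessContract

section TwoScale

lemma pd_pd_mul_comp_smul (hw : ContDiff ℝ 2 w) (hφ : ContDiffOn ℝ 2 φ Ω) (hΩ : IsOpen Ω)
    (hx : x ∈ Ω) (c : ℝ) (i j : Fin n) :
    pd i (pd j (fun y => w (c • y) * φ y)) x
      = c ^ 2 * pd i (pd j w) (c • x) * φ x + c * pd j w (c • x) * pd i φ x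
        + c * pd i w (c • x) * pd j φ x + w (c • x) * pd i (pd j φ) x := by
  have hφ₂ := hφ.twiceDiffOn hΩ
  have hw₁ : Differentiable ℝ w := hw.differentiable two_ne_zero
  have hwj : Differentiable ℝ (pd j w) := (hw.pd (m := 1) j).differentiable one_ne_zero
  have hsmul : DifferentiableAt ℝ (fun y : Fin n → ℝ => c • y) x :=
    differentiableAt_id.const_smul c
  have hC : DifferentiableAt ℝ (fun y => pd j w (c • y)) x := (hwj _).comp x hsmul
  have hA : DifferentiableAt ℝ (fun y => c * pd j w (c • y)) x := hC.const_mul c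
  have hB : DifferentiableAt ℝ (fun y => w (c • y)) x := (hw₁ _).comp x hsmul
  rw [pd_pd_of_eqOn hΩ (fun y hy => pd_mul_comp_smul (hw₁ _) (hφ₂.differentiableAt hΩ hy) j) hx,
    pd_add (hA.fun_mul (hφ₂.differentiableAt hΩ hx)) (hB.fun_mul (hφ₂.differentiableAt_pd hΩ hx j)),
    pd_mul hA (hφ₂.differentiableAt hΩ hx), pd_const_mul hC, pd_comp_smul,
    pd_mul_comp_smul (hw₁ _) (hφ₂.differentiableAt_pd hΩ hx j)]
  ring

lemma hessContract_mul_comp_smul {a : Fin n → Fin n → ℝ} (ha : ∀ i j, a i j = a j i)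
    (hw : ContDiff ℝ 2 w) (hφ : ContDiffOn ℝ 2 φ Ω) (hΩ : IsOpen Ω) (hx : x ∈ Ω) (c : ℝ) :
    hessContract a (fun y => w (c • y) * φ y) x
      = c ^ 2 * hessContract a w (c • x) * φ x
        + 2 * c * ∑ i, ∑ j, a i j * pd i w (c • x) * pd j φ x
        + w (c • x) * hessContract a φ x := by
  have hsymm : ∑ i, ∑ j, a i j * (c * pd j w (c • x) * pd i φ x)
      = ∑ i, ∑ j, a i j * (c * pd i w (c • x) * pd j φ x) := by
    rw [sum_comm]; simp only [ha]
  simp only [hessContract, pd_pd_mul_comp_smul hw hφ hΩ hx, mul_add, sum_add_distrib, hsymm]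
  simp only [mul_sum, sum_mul, ← sum_add_distrib]
  exact sum_congr rfl fun i _ => sum_congr rfl fun j _ => by ring

end TwoScale

section Correctors

noncomputable def firstCorrector (c : ℝ) (v : Fin n → Fin n → (Fin n → ℝ) → ℝ)
    (u : (Fin n → ℝ) → ℝ) (y : Fin n → ℝ) : ℝ :=
  ∑ k, ∑ l, v k l (c • y) * pd k (pd l u) y

noncomputable def secondCorrector (c : ℝ) (χ : Fin n → Fin n → Fin n → (Fin n → ℝ) → ℝ)
    (u : (Fin n → ℝ) → ℝ) (y : Fin n → ℝ) : ℝ :=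
  ∑ j, ∑ k, ∑ l, χ j k l (c • y) * pd j (pd k (pd l u)) y

variable {u : (Fin n → ℝ) → ℝ} {v : Fin n → Fin n → (Fin n → ℝ) → ℝ}
  {χ : Fin n → Fin n → Fin n → (Fin n → ℝ) → ℝ} {a : Fin n → Fin n → ℝ}

lemma twiceDiffOn_mul_comp_smul (hw : ContDiff ℝ 2 w) (hφ : ContDiffOn ℝ 2 φ Ω) (hΩ : IsOpen Ω)
    (c : ℝ) : TwiceDiffOn (fun y => w (c • y) * φ y) Ω :=
  ((hw.comp (contDiff_const_smul c)).contDiffOn.mul hφ).twiceDiffOn hΩ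

lemma contDiffOn_pd_pd (hu : ContDiffOn ℝ 4 u Ω) (hΩ : IsOpen Ω) (k l : Fin n) :
    ContDiffOn ℝ 2 (pd k (pd l u)) Ω :=
  (hu.pd (m := 3) hΩ l).pd hΩ k

lemma contDiffOn_pd_pd_pd (hu : ContDiffOn ℝ 5 u Ω) (hΩ : IsOpen Ω) (j k l : Fin n) :
    ContDiffOn ℝ 2 (pd j (pd k (pd l u))) Ω :=
  ((hu.pd (m := 4) hΩ l).pd (m := 3) hΩ k).pd hΩ j

lemma twiceDiffOn_firstCorrector (hΩ : IsOpen Ω) (hu : ContDiffOn ℝ 4 u Ω)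
    (hv : ∀ k l, ContDiff ℝ 2 (v k l)) (c : ℝ) : TwiceDiffOn (firstCorrector c v u) Ω :=
  TwiceDiffOn.sum (fun k => TwiceDiffOn.sum (fun l =>
    twiceDiffOn_mul_comp_smul (hv k l) (contDiffOn_pd_pd hu hΩ k l) hΩ c) hΩ) hΩ

lemma twiceDiffOn_secondCorrector (hΩ : IsOpen Ω) (hu : ContDiffOn ℝ 5 u Ω)
    (hχ : ∀ j k l, ContDiff ℝ 2 (χ j k l)) (c : ℝ) : TwiceDiffOn (secondCorrector c χ u) Ω :=
  TwiceDiffOn.sum (fun j => TwiceDiffOn.sum (fun k => TwiceDiffOn.sum (fun l =>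
    twiceDiffOn_mul_comp_smul (hχ j k l) (contDiffOn_pd_pd_pd hu hΩ j k l) hΩ c) hΩ) hΩ) hΩ

lemma hessContract_firstCorrector (ha : ∀ i j, a i j = a j i) (hΩ : IsOpen Ω) (hx : x ∈ Ω)
    (hu : ContDiffOn ℝ 4 u Ω) (hv : ∀ k l, ContDiff ℝ 2 (v k l)) (c : ℝ) :
    hessContract a (firstCorrector c v u) x
      = ∑ k, ∑ l, (c ^ 2 * hessContract a (v k l) (c • x) * pd k (pd l u) x
        + 2 * c * ∑ i, ∑ j, a i j * pd i (v k l) (c • x) * pd j (pd k (pd l u)) x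
        + v k l (c • x) * hessContract a (pd k (pd l u)) x) := by
  have hterm := fun k l => twiceDiffOn_mul_comp_smul (hv k l) (contDiffOn_pd_pd hu hΩ k l) hΩ c
  unfold firstCorrector
  rw [hessContract_sum a (fun k => TwiceDiffOn.sum (hterm k) hΩ) hΩ hx]
  simp only [hessContract_sum a (hterm _) hΩ hx,
    hessContract_mul_comp_smul ha (hv _ _) (contDiffOn_pd_pd hu hΩ _ _) hΩ hx]

lemma hessContract_secondCorrector (ha : ∀ i j, a i j = a j i) (hΩ : IsOpen Ω) (hx : x ∈ Ω)
    (hu : ContDiffOn ℝ 5 u Ω) (hχ : ∀ j k l, ContDiff ℝ 2 (χ j k l)) (c : ℝ) :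
    hessContract a (secondCorrector c χ u) x
      = ∑ j, ∑ k, ∑ l, (c ^ 2 * hessContract a (χ j k l) (c • x) * pd j (pd k (pd l u)) x
        + 2 * c * ∑ i, ∑ i', a i i' * pd i (χ j k l) (c • x) * pd i' (pd j (pd k (pd l u))) x
        + χ j k l (c • x) * hessContract a (pd j (pd k (pd l u))) x) := by
  have hterm := fun j k l =>
    twiceDiffOn_mul_comp_smul (hχ j k l) (contDiffOn_pd_pd_pd hu hΩ j k l) hΩ c
  unfold secondCorrector
  rw [hessContract_sum a (fun j => TwiceDiffOn.sum (fun k =>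
    TwiceDiffOn.sum (hterm j k) hΩ) hΩ) hΩ hx]
  simp only [hessContract_sum a (fun k => TwiceDiffOn.sum (hterm _ k) hΩ) hΩ hx,
    hessContract_sum a (hterm _ _) hΩ hx,
    hessContract_mul_comp_smul ha (hχ _ _ _) (contDiffOn_pd_pd_pd hu hΩ _ _ _) hΩ hx]

end Correctors

lemma sum_sum_sum_sum_rotate {α β γ δ R : Type*} [Fintype α] [Fintype β] [Fintype γ] [Fintype δ]
    [AddCommMonoid R] (F : α → β → γ → δ → R) :
    ∑ a, ∑ b, ∑ c, ∑ d, F a b c d = ∑ d, ∑ a, ∑ b, ∑ c, F a b c d :=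
  (sum_congr rfl fun _ _ => (sum_congr rfl fun _ _ => sum_comm).trans sum_comm).trans sum_comm

section Remainders

lemma twiceDiffOn_firstRemainder {uε u θ w : (Fin n → ℝ) → ℝ}
    {v : Fin n → Fin n → (Fin n → ℝ) → ℝ} (hΩ : IsOpen Ω) (huε : TwiceDiffOn uε Ω)
    (hu : ContDiffOn ℝ 4 u Ω) (hv : ∀ k l, ContDiff ℝ 2 (v k l)) (hθ : TwiceDiffOn θ Ω)
    (hw : TwiceDiffOn w Ω) (ε : ℝ) :
    TwiceDiffOn (fun y => uε y - u y - ε ^ 2 * (firstCorrector ε⁻¹ v u y + θ y) - 2 * ε * w y) Ω :=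
  ((huε.sub ((hu.of_le (by norm_num)).twiceDiffOn hΩ) hΩ).sub
    (((twiceDiffOn_firstCorrector hΩ hu hv _).add hθ hΩ).const_mul hΩ _) hΩ).sub
    (hw.const_mul hΩ _) hΩ

lemma twiceDiffOn_secondRemainder {u θχ w z : (Fin n → ℝ) → ℝ}
    {χ : Fin n → Fin n → Fin n → (Fin n → ℝ) → ℝ} (hΩ : IsOpen Ω) (hw : TwiceDiffOn w Ω)
    (hz : TwiceDiffOn z Ω) (hu : ContDiffOn ℝ 5 u Ω) (hχ : ∀ j k l, ContDiff ℝ 2 (χ j k l))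
    (hθχ : TwiceDiffOn θχ Ω) (ε : ℝ) :
    TwiceDiffOn (fun y => w y + z y - ε ^ 2 * (secondCorrector ε⁻¹ χ u y + θχ y)) Ω :=
  (hw.add hz hΩ).sub (((twiceDiffOn_secondCorrector hΩ hu hχ _).add hθχ hΩ).const_mul hΩ _) hΩ

variable {a : Fin n → Fin n → ℝ} {ε : ℝ} {u : (Fin n → ℝ) → ℝ}
  {v : Fin n → Fin n → (Fin n → ℝ) → ℝ} {χ : Fin n → Fin n → Fin n → (Fin n → ℝ) → ℝ}

lemma hessContract_firstRemainder {Abar : Fin n → Fin n → ℝ} (ha : ∀ i j, a i j = a j i)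
    (hε : ε ≠ 0) {f uε θ w : (Fin n → ℝ) → ℝ} (hΩ : IsOpen Ω) (hx : x ∈ Ω)
    (huε : TwiceDiffOn uε Ω) (hu : ContDiffOn ℝ 4 u Ω) (hv : ∀ k l, ContDiff ℝ 2 (v k l))
    (hθ : TwiceDiffOn θ Ω) (hw : TwiceDiffOn w Ω)
    (huεeq : -hessContract a uε x = f x) (hueq : -hessContract Abar u x = f x)
    (hveq : ∀ k l, -hessContract a (v k l) (ε⁻¹ • x) = a k l - Abar k l)
    (hθeq : hessContract a θ x = 0)
    (hweq : -hessContract a w x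
      = ∑ i, ∑ j, ∑ k, ∑ l, a i j * pd i (v k l) (ε⁻¹ • x) * pd j (pd k (pd l u)) x) :
    hessContract a (fun y => uε y - u y - ε ^ 2 * (firstCorrector ε⁻¹ v u y + θ y) - 2 * ε * w y) x
      = -(ε ^ 2 * ∑ k, ∑ l, v k l (ε⁻¹ • x) * hessContract a (pd k (pd l u)) x) := by
  set S := ∑ i, ∑ j, ∑ k, ∑ l, a i j * pd i (v k l) (ε⁻¹ • x) * pd j (pd k (pd l u)) x
  have hV := twiceDiffOn_firstCorrector hΩ hu hv ε⁻¹
  have hu₂ : TwiceDiffOn u Ω := (hu.of_le (by norm_num)).twiceDiffOn hΩ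
  have hLV : hessContract a (firstCorrector ε⁻¹ v u) x
      = ε⁻¹ ^ 2 * (hessContract Abar u x - hessContract a u x) + 2 * ε⁻¹ * S
        + ∑ k, ∑ l, v k l (ε⁻¹ • x) * hessContract a (pd k (pd l u)) x := by
    have hv' : ∀ k l, hessContract a (v k l) (ε⁻¹ • x) = Abar k l - a k l := fun k l => by
      linarith [hveq k l]
    rw [hessContract_firstCorrector ha hΩ hx hu hv]
    simp only [hv', sum_add_distrib]
    congr 2
    · simp only [hessContract, mul_sum, ← sum_sub_distrib]
      exact sum_congr rfl fun k _ => sum_congr rfl fun l _ => by ring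
    · simp only [S, ← mul_sum, sum_sum_sum_sum_rotate (fun k l i j =>
        a i j * pd i (v k l) (ε⁻¹ • x) * pd j (pd k (pd l u)) x)]
      rw [sum_sum_sum_sum_rotate]
  rw [hessContract_sub a ((huε.sub hu₂ hΩ).sub ((hV.add hθ hΩ).const_mul hΩ _) hΩ)
      (hw.const_mul hΩ _) hΩ hx, hessContract_sub a (huε.sub hu₂ hΩ)
      ((hV.add hθ hΩ).const_mul hΩ _) hΩ hx, hessContract_sub a huε hu₂ hΩ hx,
    hessContract_const_mul a (hV.add hθ hΩ) hΩ hx, hessContract_add a hV hθ hΩ hx,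
    hessContract_const_mul a hw hΩ hx, hLV, hθeq]
  linear_combination hueq - huεeq + 2 * ε * hweq
    - ((hessContract Abar u x - hessContract a u x) * (ε * ε⁻¹ + 1) + 2 * ε * S)
      * mul_inv_cancel₀ hε

lemma hessContract_secondRemainder {c : Fin n → Fin n → Fin n → ℝ} (ha : ∀ i j, a i j = a j i)
    (hε : ε ≠ 0) {θχ w z : (Fin n → ℝ) → ℝ} (hΩ : IsOpen Ω) (hx : x ∈ Ω)
    (hu : ContDiffOn ℝ 5 u Ω) (hχ : ∀ j k l, ContDiff ℝ 2 (χ j k l))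
    (hθχ : TwiceDiffOn θχ Ω) (hw : TwiceDiffOn w Ω) (hz : TwiceDiffOn z Ω)
    (hχeq : ∀ j k l, -hessContract a (χ j k l) (ε⁻¹ • x)
      = (∑ i, a i j * pd i (v k l) (ε⁻¹ • x)) - c j k l)
    (hθχeq : hessContract a θχ x = 0)
    (hweq : -hessContract a w x
      = ∑ i, ∑ j, ∑ k, ∑ l, a i j * pd i (v k l) (ε⁻¹ • x) * pd j (pd k (pd l u)) x)
    (hzeq : -hessContract a z x = -(∑ j, ∑ k, ∑ l, c j k l * pd j (pd k (pd l u)) x)) :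
    hessContract a (fun y => w y + z y - ε ^ 2 * (secondCorrector ε⁻¹ χ u y + θχ y)) x
      = -(2 * ε * ∑ j, ∑ k, ∑ l, ∑ i, ∑ i',
            a i i' * pd i (χ j k l) (ε⁻¹ • x) * pd i' (pd j (pd k (pd l u))) x
          + ε ^ 2 * ∑ j, ∑ k, ∑ l,
              χ j k l (ε⁻¹ • x) * hessContract a (pd j (pd k (pd l u))) x) := by
  set S := ∑ i, ∑ j, ∑ k, ∑ l, a i j * pd i (v k l) (ε⁻¹ • x) * pd j (pd k (pd l u)) x
  set h := ∑ j, ∑ k, ∑ l, c j k l * pd j (pd k (pd l u)) x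
  set B := ∑ j, ∑ k, ∑ l, ∑ i, ∑ i',
    a i i' * pd i (χ j k l) (ε⁻¹ • x) * pd i' (pd j (pd k (pd l u))) x
  have hX := twiceDiffOn_secondCorrector hΩ hu hχ ε⁻¹
  have hLX : hessContract a (secondCorrector ε⁻¹ χ u) x
      = ε⁻¹ ^ 2 * (h - S) + 2 * ε⁻¹ * B
        + ∑ j, ∑ k, ∑ l, χ j k l (ε⁻¹ • x) * hessContract a (pd j (pd k (pd l u))) x := by
    have hχ' : ∀ j k l, hessContract a (χ j k l) (ε⁻¹ • x)
        = c j k l - ∑ i, a i j * pd i (v k l) (ε⁻¹ • x) := fun j k l => by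
      linarith [hχeq j k l]
    have hS : S = ∑ j, ∑ k, ∑ l, ∑ i, a i j * pd i (v k l) (ε⁻¹ • x) * pd j (pd k (pd l u)) x :=
      (sum_sum_sum_sum_rotate _).symm
    rw [hessContract_secondCorrector ha hΩ hx hu hχ]
    simp only [hχ', sum_add_distrib]
    congr 2
    · simp only [hS, h, mul_sub, mul_sum, ← sum_sub_distrib, sub_mul, sum_mul, mul_assoc]
    · simp only [B, ← mul_sum]
  rw [hessContract_sub a (hw.add hz hΩ) ((hX.add hθχ hΩ).const_mul hΩ _) hΩ hx,
    hessContract_add a hw hz hΩ hx, hessContract_const_mul a (hX.add hθχ hΩ) hΩ hx,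
    hessContract_add a hX hθχ hΩ hx, hLX, hθχeq]
  linear_combination -hweq - hzeq - ((h - S) * (ε * ε⁻¹ + 1) + 2 * ε * B) * mul_inv_cancel₀ hε

end Remainders

section GradNorm

lemma abs_pd_le_gradNorm (f : (Fin n → ℝ) → ℝ) (x : Fin n → ℝ) (i : Fin n) :
    |pd i f x| ≤ gradNorm f x := by
  rw [← Real.sqrt_sq_eq_abs]
  exact Real.sqrt_le_sqrt (single_le_sum (f := fun j => pd j f x ^ 2)
    (fun j _ => sq_nonneg _) (mem_univ i))

lemma gradNorm_le_of_abs_pd_le {K : ℝ} (hK : 0 ≤ K) (h : ∀ i, |pd i f x| ≤ K) :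
    gradNorm f x ≤ √n * K := by
  unfold gradNorm
  rw [← Real.sqrt_sq hK, ← Real.sqrt_mul (Nat.cast_nonneg n)]
  refine Real.sqrt_le_sqrt ((sum_le_sum (g := fun _ => K ^ 2) fun i _ => ?_).trans_eq (by simp))
  rw [← sq_abs]
  exact pow_le_pow_left₀ (abs_nonneg _) (h i) 2

lemma gradNorm_eq_norm (f : (Fin n → ℝ) → ℝ) (x : Fin n → ℝ) :
    gradNorm f x = ‖(WithLp.toLp 2 fun i => pd i f x : EuclideanSpace ℝ (Fin n))‖ := by
  simp [gradNorm, EuclideanSpace.norm_eq]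

lemma gradNorm_add_le (hf : DifferentiableAt ℝ f x) (hg : DifferentiableAt ℝ g x) :
    gradNorm (fun y => f y + g y) x ≤ gradNorm f x + gradNorm g x := by
  simp only [gradNorm_eq_norm, pd_add hf hg]
  exact norm_add_le (WithLp.toLp 2 fun i => pd i f x : EuclideanSpace ℝ (Fin n))
    (WithLp.toLp 2 fun i => pd i g x)

lemma gradNorm_const_mul (hf : DifferentiableAt ℝ f x) (c : ℝ) :
    gradNorm (fun y => c * f y) x = |c| * gradNorm f x := by
  simp only [gradNorm, pd_const_mul hf, mul_pow, ← mul_sum]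
  rw [Real.sqrt_mul (sq_nonneg c), Real.sqrt_sq_eq_abs]

noncomputable def absAddGradNorm (f : (Fin n → ℝ) → ℝ) (x : Fin n → ℝ) : ℝ :=
  |f x| + gradNorm f x

lemma abs_le_absAddGradNorm : |f x| ≤ absAddGradNorm f x :=
  le_add_of_nonneg_right (Real.sqrt_nonneg _)

lemma abs_pd_le_absAddGradNorm (i : Fin n) : |pd i f x| ≤ absAddGradNorm f x :=
  (abs_pd_le_gradNorm f x i).trans (le_add_of_nonneg_left (abs_nonneg _))

lemma absAddGradNorm_add_le (hf : DifferentiableAt ℝ f x) (hg : DifferentiableAt ℝ g x) :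
    absAddGradNorm (fun y => f y + g y) x ≤ absAddGradNorm f x + absAddGradNorm g x := by
  have hgrad := gradNorm_add_le hf hg
  have habs := abs_add_le (f x) (g x)
  simp only [absAddGradNorm]
  linarith

lemma absAddGradNorm_const_mul (hf : DifferentiableAt ℝ f x) (c : ℝ) :
    absAddGradNorm (fun y => c * f y) x = |c| * absAddGradNorm f x := by
  simp only [absAddGradNorm, gradNorm_const_mul hf, abs_mul, mul_add]

end GradNorm

lemma lpNorm_le_of_abs_le {q K : ℝ} (hq : 0 < q) (hΩ : MeasurableSet Ω) (hΩfin : volume Ω < ⊤)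
    (hK : 0 ≤ K) (h : ∀ x ∈ Ω, |g x| ≤ K) : lpNorm q Ω g ≤ K * (volume Ω).toReal ^ (1 / q) := by
  have hint : ∫ x in Ω, |g x| ^ q ≤ K ^ q * (volume Ω).toReal := by
    -- in the non-integrable case the Bochner integral is `0`
    by_cases hg : IntegrableOn (fun x => |g x| ^ q) Ω
    · calc ∫ x in Ω, |g x| ^ q ≤ ∫ _ in Ω, K ^ q :=
            setIntegral_mono_on hg (integrableOn_const hΩfin.ne) hΩ fun x hx =>
              Real.rpow_le_rpow (abs_nonneg _) (h x hx) hq.le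
        _ = K ^ q * (volume Ω).toReal := by simp [measureReal_def, mul_comm]
    · rw [integral_undef hg]
      positivity
  calc lpNorm q Ω g ≤ (K ^ q * (volume Ω).toReal) ^ (1 / q) :=
        Real.rpow_le_rpow (setIntegral_nonneg hΩ fun _ _ => by positivity) hint (by positivity)
    _ = K * (volume Ω).toReal ^ (1 / q) := by
        rw [Real.mul_rpow (by positivity) ENNReal.toReal_nonneg, ← Real.rpow_mul hK,
          mul_one_div_cancel hq.ne', Real.rpow_one]

lemma abs_mul_le_mul_of_abs_le {a b M N : ℝ} (ha : |a| ≤ M) (hb : |b| ≤ N) : |a * b| ≤ M * N := by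
  rw [abs_mul]
  exact mul_le_mul ha hb (abs_nonneg _) ((abs_nonneg _).trans ha)

lemma abs_sum_fin_le {K : ℝ} {F : Fin n → ℝ} (h : ∀ i, |F i| ≤ K) : |∑ i, F i| ≤ n * K :=
  (abs_sum_le_sum_abs _ _).trans ((sum_le_sum fun i _ => h i).trans_eq (by simp))

lemma abs_hessContract_le {a : Fin n → Fin n → ℝ} {M N : ℝ} (ha : ∀ i j, |a i j| ≤ M)
    (hf : ∀ i j, |pd i (pd j f) x| ≤ N) : |hessContract a f x| ≤ n * (n * (M * N)) :=
  abs_sum_fin_le fun i => abs_sum_fin_le fun j => abs_mul_le_mul_of_abs_le (ha i j) (hf i j)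

section Estimates

variable {a : Fin n → Fin n → ℝ} {ε M : ℝ}

lemma abs_firstRemainder_hessContract_le {b : Fin n → Fin n → ℝ}
    {φ : Fin n → Fin n → (Fin n → ℝ) → ℝ} (ha : ∀ i j, |a i j| ≤ M) (hb : ∀ k l, |b k l| ≤ M)
    (hφ : ∀ i j k l, |pd i (pd j (φ k l)) x| ≤ M) :
    |-(ε ^ 2 * ∑ k, ∑ l, b k l * hessContract a (φ k l) x)| ≤ ε ^ 2 * (n ^ 4 * M ^ 3) := by
  rw [abs_neg, abs_mul, abs_sq]
  gcongr
  calc |∑ k, ∑ l, b k l * hessContract a (φ k l) x| ≤ n * (n * (M * (n * (n * (M * M))))) :=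
        abs_sum_fin_le fun k => abs_sum_fin_le fun l =>
          abs_mul_le_mul_of_abs_le (hb k l) (abs_hessContract_le ha (hφ · · k l))
    _ = n ^ 4 * M ^ 3 := by ring

lemma abs_secondRemainder_hessContract_le (hM : 0 ≤ M) (hε₀ : 0 ≤ ε) (hε₁ : ε ≤ 1)
    {b : Fin n → Fin n → Fin n → ℝ} {d : Fin n → Fin n → Fin n → Fin n → ℝ}
    {φ : Fin n → Fin n → Fin n → (Fin n → ℝ) → ℝ} (ha : ∀ i j, |a i j| ≤ M)
    (hb : ∀ j k l, |b j k l| ≤ M) (hd : ∀ i j k l, |d i j k l| ≤ M)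
    (hφ₁ : ∀ i j k l, |pd i (φ j k l) x| ≤ M) (hφ₂ : ∀ i i' j k l, |pd i (pd i' (φ j k l)) x| ≤ M) :
    |-(2 * ε * ∑ j, ∑ k, ∑ l, ∑ i, ∑ i', a i i' * d i j k l * pd i' (φ j k l) x
        + ε ^ 2 * ∑ j, ∑ k, ∑ l, b j k l * hessContract a (φ j k l) x)|
      ≤ ε * (3 * (n ^ 5 * M ^ 3)) := by
  have h₁ : |∑ j, ∑ k, ∑ l, ∑ i, ∑ i', a i i' * d i j k l * pd i' (φ j k l) x|
      ≤ n * (n * (n * (n * (n * (M * M * M))))) :=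
    abs_sum_fin_le fun j => abs_sum_fin_le fun k => abs_sum_fin_le fun l =>
      abs_sum_fin_le fun i => abs_sum_fin_le fun i' => abs_mul_le_mul_of_abs_le
        (abs_mul_le_mul_of_abs_le (ha i i') (hd i j k l)) (hφ₁ i' j k l)
  have h₂ : |∑ j, ∑ k, ∑ l, b j k l * hessContract a (φ j k l) x|
      ≤ n * (n * (n * (M * (n * (n * (M * M)))))) :=
    abs_sum_fin_le fun j => abs_sum_fin_le fun k => abs_sum_fin_le fun l =>
      abs_mul_le_mul_of_abs_le (hb j k l) (abs_hessContract_le ha (hφ₂ · · j k l))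
  rw [abs_neg]
  calc |2 * ε * ∑ j, ∑ k, ∑ l, ∑ i, ∑ i', a i i' * d i j k l * pd i' (φ j k l) x
        + ε ^ 2 * ∑ j, ∑ k, ∑ l, b j k l * hessContract a (φ j k l) x|
      ≤ 2 * ε * |∑ j, ∑ k, ∑ l, ∑ i, ∑ i', a i i' * d i j k l * pd i' (φ j k l) x|
        + ε ^ 2 * |∑ j, ∑ k, ∑ l, b j k l * hessContract a (φ j k l) x| := by
        refine (abs_add_le _ _).trans_eq ?_
        rw [abs_mul (2 * ε), abs_mul (ε ^ 2), abs_of_nonneg (by positivity : (0:ℝ) ≤ 2 * ε), abs_sq]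
    _ ≤ 2 * ε * (n ^ 5 * M ^ 3) + ε * (n ^ 5 * M ^ 3) := by
        have hεsq : ε ^ 2 ≤ ε := by nlinarith
        refine add_le_add (mul_le_mul_of_nonneg_left (h₁.trans_eq (by ring)) (by positivity))
          ((mul_le_mul_of_nonneg_left (h₂.trans_eq (by ring)) (sq_nonneg ε)).trans
            (mul_le_mul_of_nonneg_right hεsq (by positivity)))
    _ = ε * (3 * (n ^ 5 * M ^ 3)) := by ring

end Estimates

lemma absAddGradNorm_secondCorrector_le {c M : ℝ} {u : (Fin n → ℝ) → ℝ}
    {χ : Fin n → Fin n → Fin n → (Fin n → ℝ) → ℝ} (hc : 1 ≤ c) (hM : 0 ≤ M) (hΩ : IsOpen Ω)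
    (hx : x ∈ Ω) (hu : ContDiffOn ℝ 4 u Ω) (hχ : ∀ j k l, Differentiable ℝ (χ j k l))
    (hχbd : ∀ j k l, absAddGradNorm (χ j k l) (c • x) ≤ M)
    (hu₃ : ∀ j k l, |pd j (pd k (pd l u)) x| ≤ M)
    (hu₄ : ∀ i j k l, |pd i (pd j (pd k (pd l u))) x| ≤ M) :
    absAddGradNorm (secondCorrector c χ u) x ≤ n ^ 3 * M ^ 2 * (1 + 2 * √n) * c := by
  have hχ₀ : ∀ j k l, |χ j k l (c • x)| ≤ M := fun j k l =>
    abs_le_absAddGradNorm.trans (hχbd j k l)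
  have hχ₁ : ∀ i j k l, |pd i (χ j k l) (c • x)| ≤ M := fun i j k l =>
    (abs_pd_le_absAddGradNorm i).trans (hχbd j k l)
  have hφ : ∀ j k l, DifferentiableAt ℝ (pd j (pd k (pd l u))) x := fun j k l =>
    (((contDiffOn_pd_pd hu hΩ k l).pd (m := 1) hΩ j).differentiableOn
      one_ne_zero).differentiableAt (hΩ.mem_nhds hx)
  have hterm : ∀ j k l, DifferentiableAt ℝ
      (fun y => χ j k l (c • y) * pd j (pd k (pd l u)) y) x := fun j k l =>
    ((hχ j k l _).comp x (differentiableAt_id.const_smul c)).fun_mul (hφ j k l)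
  have hpd : ∀ i, |pd i (secondCorrector c χ u) x| ≤ n * (n * (n * (c * M * M + M * M))) := by
    intro i
    unfold secondCorrector
    rw [pd_sum fun j => DifferentiableAt.fun_sum fun k _ => DifferentiableAt.fun_sum fun l _ =>
      hterm j k l]
    simp only [pd_sum fun k => DifferentiableAt.fun_sum fun l _ => hterm _ k l,
      pd_sum (hterm _ _), pd_mul_comp_smul (hχ _ _ _ _) (hφ _ _ _)]
    refine abs_sum_fin_le fun j => abs_sum_fin_le fun k => abs_sum_fin_le fun l =>
      (abs_add_le _ _).trans (add_le_add ?_ (abs_mul_le_mul_of_abs_le (hχ₀ j k l) (hu₄ i j k l)))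
    rw [mul_assoc]
    exact (abs_mul_le_mul_of_abs_le (abs_of_nonneg (zero_le_one.trans hc)).le
      (abs_mul_le_mul_of_abs_le (hχ₁ i j k l) (hu₃ j k l))).trans_eq (by ring)
  have hval : |secondCorrector c χ u x| ≤ n * (n * (n * (M * M))) :=
    abs_sum_fin_le fun j => abs_sum_fin_le fun k => abs_sum_fin_le fun l =>
      abs_mul_le_mul_of_abs_le (hχ₀ j k l) (hu₃ j k l)
  have hgrad := gradNorm_le_of_abs_pd_le (by positivity) hpd
  have hsqrt : 0 ≤ √(n : ℝ) := Real.sqrt_nonneg _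
  have hK : 0 ≤ (n : ℝ) ^ 3 * M ^ 2 := by positivity
  calc absAddGradNorm (secondCorrector c χ u) x
      ≤ n ^ 3 * M ^ 2 + √n * (n ^ 3 * M ^ 2 * (c + 1)) := by
        unfold absAddGradNorm
        exact add_le_add (hval.trans_eq (by ring)) (hgrad.trans_eq (by ring))
    _ ≤ n ^ 3 * M ^ 2 * (1 + 2 * √n) * c := by nlinarith [mul_nonneg hsqrt hK]

lemma absAddGradNorm_le_of_uniformEstimate {a : (Fin n → ℝ) → Fin n → Fin n → ℝ} {q C₀ K : ℝ}
    (hAL : ∀ w : (Fin n → ℝ) → ℝ, TwiceDiffOn w Ω → ContinuousOn w (closure Ω) →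
      (∀ x ∈ frontier Ω, w x = 0) →
      ∀ x ∈ Ω, |w x| + gradNorm w x ≤ C₀ * lpNorm q Ω (fun y => hessContract (a y) w y))
    (hq : 0 < q) (hC₀ : 0 ≤ C₀) (hΩ : MeasurableSet Ω) (hΩfin : volume Ω < ⊤)
    (hw : TwiceDiffOn w Ω) (hbc : ContinuousOn w (closure Ω) ∧ ∀ x ∈ frontier Ω, w x = 0)
    (hx : x ∈ Ω) (hK : 0 ≤ K) (hL : ∀ y ∈ Ω, |hessContract (a y) w y| ≤ K) :
    absAddGradNorm w x ≤ C₀ * (K * (volume Ω).toReal ^ (1 / q)) :=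
  (hAL w hw hbc.1 hbc.2 x hx).trans
    (mul_le_mul_of_nonneg_left (lpNorm_le_of_abs_le hq hΩ hΩfin hK hL) hC₀)

lemma absAddGradNorm_error_le {uε u V θ w z X θχ : (Fin n → ℝ) → ℝ} {ε K₁ K₂ K₃ : ℝ}
    (hε : 0 < ε)
    (hd₁ : DifferentiableAt ℝ (fun y => uε y - u y - ε ^ 2 * (V y + θ y) - 2 * ε * w y) x)
    (hd₂ : DifferentiableAt ℝ (fun y => w y + z y - ε ^ 2 * (X y + θχ y)) x)
    (hdX : DifferentiableAt ℝ X x)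
    (h₁ : absAddGradNorm (fun y => uε y - u y - ε ^ 2 * (V y + θ y) - 2 * ε * w y) x ≤ K₁ * ε ^ 2)
    (h₂ : absAddGradNorm (fun y => w y + z y - ε ^ 2 * (X y + θχ y)) x ≤ K₂ * ε)
    (h₃ : absAddGradNorm X x ≤ K₃ * ε⁻¹) :
    absAddGradNorm (fun y => uε y - u y + 2 * ε * z y - ε ^ 2 * V y - ε ^ 2 * θ y
        - 2 * ε ^ 3 * θχ y) x ≤ (K₁ + 2 * K₂ + 2 * K₃) * ε ^ 2 := by
  have hsplit : (fun y => uε y - u y + 2 * ε * z y - ε ^ 2 * V y - ε ^ 2 * θ y - 2 * ε ^ 3 * θχ y)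
      = fun y => (uε y - u y - ε ^ 2 * (V y + θ y) - 2 * ε * w y
          + 2 * ε * (w y + z y - ε ^ 2 * (X y + θχ y))) + 2 * ε ^ 3 * X y := by
    funext y
    ring
  have h2ε : 0 ≤ 2 * ε := by positivity
  have h2ε₃ : 0 ≤ 2 * ε ^ 3 := by positivity
  rw [hsplit]
  calc _ ≤ absAddGradNorm (fun y => uε y - u y - ε ^ 2 * (V y + θ y) - 2 * ε * w y) x
        + absAddGradNorm (fun y => 2 * ε * (w y + z y - ε ^ 2 * (X y + θχ y))) x
        + absAddGradNorm (fun y => 2 * ε ^ 3 * X y) x :=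
        (absAddGradNorm_add_le (hd₁.fun_add (hd₂.const_mul _)) (hdX.const_mul _)).trans
          (add_le_add_left (absAddGradNorm_add_le hd₁ (hd₂.const_mul _)) _)
    _ ≤ K₁ * ε ^ 2 + 2 * ε * (K₂ * ε) + 2 * ε ^ 3 * (K₃ * ε⁻¹) := by
        rw [absAddGradNorm_const_mul hd₂, absAddGradNorm_const_mul hdX, abs_of_nonneg h2ε,
          abs_of_nonneg h2ε₃]
        exact add_le_add (add_le_add h₁ (mul_le_mul_of_nonneg_left h₂ h2ε))
          (mul_le_mul_of_nonneg_left h₃ h2ε₃)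
    _ = (K₁ + 2 * K₂ + 2 * K₃) * ε ^ 2 := by
        field_simp

theorem W1infty_key_estimate_general {n : ℕ}
    (q M C₀ : ℝ) (hq : 0 < q) (hM : 0 < M) (hC₀ : 0 < C₀)
    (Ω : Set (Fin n → ℝ)) (hΩb : Bornology.IsBounded Ω) (hΩo : IsOpen Ω)
    (A : (Fin n → ℝ) → Fin n → Fin n → ℝ)
    (hAsymm : ∀ y i j, A y i j = A y j i)
    (hAbd : ∀ y i j, |A y i j| ≤ M)
    (Abar : Fin n → Fin n → ℝ)
    (f : (Fin n → ℝ) → ℝ)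
    (u : (Fin n → ℝ) → ℝ)
    (v : Fin n → Fin n → (Fin n → ℝ) → ℝ)
    (c : Fin n → Fin n → Fin n → ℝ)
    (χ : Fin n → Fin n → Fin n → (Fin n → ℝ) → ℝ)
    (uε θε θχε wε zε : ℝ → (Fin n → ℝ) → ℝ)
    -- u solves the homogenized problem, with all derivatives up to order 5 bounded by M
    (hu : ContDiffOn ℝ 5 u Ω)
    (hueq : ∀ x ∈ Ω, -(∑ i, ∑ j, Abar i j * pd i (pd j u) x) = f x)
    (hubd : ∀ x ∈ Ω, ∀ i j k l d : Fin n,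
      |u x| ≤ M ∧ |pd i u x| ≤ M ∧ |pd i (pd j u) x| ≤ M ∧
      |pd i (pd j (pd k u)) x| ≤ M ∧ |pd i (pd j (pd k (pd l u))) x| ≤ M ∧
      |pd i (pd j (pd k (pd l (pd d u)))) x| ≤ M)
    -- correctors v^{kl}
    (hv : ∀ k l, ContDiff ℝ 2 (v k l))
    (hveq : ∀ k l, ∀ y : Fin n → ℝ,
      -(∑ i, ∑ j, A y i j * pd i (pd j (v k l)) y) = A y k l - Abar k l)
    (hvbd : ∀ k l, ∀ y : Fin n → ℝ, |v k l y| + gradNorm (v k l) y ≤ M)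
    -- correctors χ^{jkl}
    (hχ : ∀ j k l, ContDiff ℝ 2 (χ j k l))
    (hχeq : ∀ j k l, ∀ y : Fin n → ℝ,
      -(∑ i, ∑ i', A y i i' * pd i (pd i' (χ j k l)) y)
        = (∑ i, A y i j * pd i (v k l) y) - c j k l)
    (hχbd : ∀ j k l, ∀ y : Fin n → ℝ, |χ j k l y| + gradNorm (χ j k l) y ≤ M)
    -- the ε-problems
    (huε : ∀ ε ∈ Set.Ioc (0:ℝ) 1, TwiceDiffOn (uε ε) Ω)
    (huεeq : ∀ ε ∈ Set.Ioc (0:ℝ) 1, ∀ x ∈ Ω,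
      -(∑ i, ∑ j, A (ε⁻¹ • x) i j * pd i (pd j (uε ε)) x) = f x)
    (hθ : ∀ ε ∈ Set.Ioc (0:ℝ) 1, TwiceDiffOn (θε ε) Ω)
    (hθeq : ∀ ε ∈ Set.Ioc (0:ℝ) 1, ∀ x ∈ Ω,
      (∑ i, ∑ j, A (ε⁻¹ • x) i j * pd i (pd j (θε ε)) x) = 0)
    (hθχ : ∀ ε ∈ Set.Ioc (0:ℝ) 1, TwiceDiffOn (θχε ε) Ω)
    (hθχeq : ∀ ε ∈ Set.Ioc (0:ℝ) 1, ∀ x ∈ Ω,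
      (∑ i, ∑ j, A (ε⁻¹ • x) i j * pd i (pd j (θχε ε)) x) = 0)
    (hw : ∀ ε ∈ Set.Ioc (0:ℝ) 1, TwiceDiffOn (wε ε) Ω)
    (hweq : ∀ ε ∈ Set.Ioc (0:ℝ) 1, ∀ x ∈ Ω,
      -(∑ i, ∑ j, A (ε⁻¹ • x) i j * pd i (pd j (wε ε)) x)
        = ∑ i, ∑ j, ∑ k, ∑ l,
            A (ε⁻¹ • x) i j * pd i (v k l) (ε⁻¹ • x) * pd j (pd k (pd l u)) x)
    (hz : ∀ ε ∈ Set.Ioc (0:ℝ) 1, TwiceDiffOn (zε ε) Ω)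
    (hzeq : ∀ ε ∈ Set.Ioc (0:ℝ) 1, ∀ x ∈ Ω,
      -(∑ i, ∑ j, A (ε⁻¹ • x) i j * pd i (pd j (zε ε)) x)
        = -(∑ j, ∑ k, ∑ l, c j k l * pd j (pd k (pd l u)) x))
    -- the uniform interior (Avellaneda–Lin) estimate
    (hAL : ∀ ε ∈ Set.Ioc (0:ℝ) 1, ∀ w : (Fin n → ℝ) → ℝ,
      TwiceDiffOn w Ω → ContinuousOn w (closure Ω) →
      (∀ x ∈ frontier Ω, w x = 0) →
      ∀ x ∈ Ω, |w x| + gradNorm w x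
        ≤ C₀ * lpNorm q Ω (fun y => ∑ i, ∑ j, A (ε⁻¹ • y) i j * pd i (pd j w) y))
    -- the two corrected functions extend continuously to the closure and vanish on ∂Ω
    (hbc₁ : ∀ ε ∈ Set.Ioc (0:ℝ) 1,
      ContinuousOn (fun x => uε ε x - u x -
        ε ^ 2 * ((∑ k, ∑ l, v k l (ε⁻¹ • x) * pd k (pd l u) x) + θε ε x)
        - 2 * ε * wε ε x) (closure Ω) ∧
      ∀ x ∈ frontier Ω, uε ε x - u x -
        ε ^ 2 * ((∑ k, ∑ l, v k l (ε⁻¹ • x) * pd k (pd l u) x) + θε ε x)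
        - 2 * ε * wε ε x = 0)
    (hbc₂ : ∀ ε ∈ Set.Ioc (0:ℝ) 1,
      ContinuousOn (fun x => wε ε x + zε ε x -
        ε ^ 2 * ((∑ j, ∑ k, ∑ l, χ j k l (ε⁻¹ • x) * pd j (pd k (pd l u)) x)
          + θχε ε x)) (closure Ω) ∧
      ∀ x ∈ frontier Ω, wε ε x + zε ε x -
        ε ^ 2 * ((∑ j, ∑ k, ∑ l, χ j k l (ε⁻¹ • x) * pd j (pd k (pd l u)) x)
          + θχε ε x) = 0) :
    ∃ C > 0, ∃ ε₀ ∈ Set.Ioc (0:ℝ) 1, ∀ ε ∈ Set.Ioo (0:ℝ) ε₀, ∀ x ∈ Ω,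
      |uε ε x - u x + 2 * ε * zε ε x
          - ε ^ 2 * (∑ k, ∑ l, v k l (ε⁻¹ • x) * pd k (pd l u) x)
          - ε ^ 2 * θε ε x - 2 * ε ^ 3 * θχε ε x|
        + gradNorm (fun y => uε ε y - u y + 2 * ε * zε ε y
          - ε ^ 2 * (∑ k, ∑ l, v k l (ε⁻¹ • y) * pd k (pd l u) y)
          - ε ^ 2 * θε ε y - 2 * ε ^ 3 * θχε ε y) x
        ≤ C * ε ^ 2 := by
  have hu₄ : ContDiffOn ℝ 4 u Ω := hu.of_le (by norm_num)
  set Vq := (volume Ω).toReal ^ (1 / q)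
  refine ⟨C₀ * (n ^ 4 * M ^ 3 * Vq) + 2 * (C₀ * (3 * (n ^ 5 * M ^ 3) * Vq))
    + 2 * (n ^ 3 * M ^ 2 * (1 + 2 * √n)) + 1, by positivity, 1, ⟨one_pos, le_rfl⟩,
    fun ε hε x hx => ?_⟩
  have hε' : ε ∈ Set.Ioc (0 : ℝ) 1 := ⟨hε.1, hε.2.le⟩
  have hT₁ := twiceDiffOn_firstRemainder hΩo (huε ε hε') hu₄ hv (hθ ε hε') (hw ε hε') ε
  have hT₂ := twiceDiffOn_secondRemainder hΩo (hw ε hε') (hz ε hε') hu hχ (hθχ ε hε') ε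
  have hE₁ := absAddGradNorm_le_of_uniformEstimate (hAL ε hε') hq hC₀.le hΩo.measurableSet
    hΩb.measure_lt_top hT₁ (hbc₁ ε hε') hx (by positivity) fun y hy =>
      (congrArg abs (hessContract_firstRemainder (hAsymm _) hε.1.ne' hΩo hy (huε ε hε') hu₄ hv
        (hθ ε hε') (hw ε hε') (huεeq ε hε' y hy) (hueq y hy) (fun k l => hveq k l _)
        (hθeq ε hε' y hy) (hweq ε hε' y hy))).trans_le
      (abs_firstRemainder_hessContract_le (hAbd _)
        (fun k l => abs_le_absAddGradNorm.trans (hvbd k l _))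
        fun i j k l => (hubd y hy i j k l l).2.2.2.2.1)
  have hE₂ := absAddGradNorm_le_of_uniformEstimate (hAL ε hε') hq hC₀.le hΩo.measurableSet
    hΩb.measure_lt_top hT₂ (hbc₂ ε hε') hx (mul_nonneg hε.1.le (by positivity)) fun y hy =>
      (congrArg abs (hessContract_secondRemainder (hAsymm _) hε.1.ne' hΩo hy hu hχ (hθχ ε hε')
        (hw ε hε') (hz ε hε') (fun j k l => hχeq j k l _) (hθχeq ε hε' y hy) (hweq ε hε' y hy)
        (hzeq ε hε' y hy))).trans_le
      (abs_secondRemainder_hessContract_le hM.le hε.1.le hε.2.le (hAbd _)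
        (fun j k l => abs_le_absAddGradNorm.trans (hχbd j k l _))
        (fun i j k l => (abs_pd_le_absAddGradNorm i).trans (hχbd j k l _))
        (fun i j k l => (hubd y hy i j k l l).2.2.2.2.1)
        fun i i' j k l => (hubd y hy i i' j k l).2.2.2.2.2)
  have hE₃ := absAddGradNorm_secondCorrector_le ((one_le_inv₀ hε.1).2 hε.2.le) hM.le hΩo hx hu₄
    (fun j k l => (hχ j k l).differentiable two_ne_zero) (fun j k l => hχbd j k l _)
    (fun j k l => (hubd x hx j k l l l).2.2.2.1) fun i j k l => (hubd x hx i j k l l).2.2.2.2.1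
  exact (absAddGradNorm_error_le hε.1 (hT₁.differentiableAt hΩo hx) (hT₂.differentiableAt hΩo hx)
    ((twiceDiffOn_secondCorrector hΩo hu hχ _).differentiableAt hΩo hx)
    (hE₁.trans_eq (by ring)) (hE₂.trans_eq (by ring)) hE₃).trans
    (mul_le_mul_of_nonneg_right (le_add_of_nonneg_right zero_le_one) (sq_nonneg ε))

/-- The key conditional `W^{1,∞}` estimate from the proof of Theorem 1.3:
`sup_Ω (|Eᵋ| + |∇Eᵋ|) ≤ C ε²` for
`Eᵋ = uᵋ − u + 2εzᵋ − ε² V(·/ε):D²u − ε²θᵋ − 2ε³θ_χᵋ`, assuming the Avellaneda–Lin-type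
uniform interior estimate. -/
theorem W1infty_key_estimate {n : ℕ} (hn : 1 ≤ n)
    (q M C₀ : ℝ) (hq : 0 < q) (hM : 0 < M) (hC₀ : 0 < C₀)
    (Ω : Set (Fin n → ℝ)) (hΩb : Bornology.IsBounded Ω) (hΩo : IsOpen Ω)
    (A : (Fin n → ℝ) → Fin n → Fin n → ℝ)
    (hAsymm : ∀ y i j, A y i j = A y j i)
    (hAbd : ∀ y i j, |A y i j| ≤ M)
    (Abar : Fin n → Fin n → ℝ) (hAbarSymm : ∀ i j, Abar i j = Abar j i)
    (f : (Fin n → ℝ) → ℝ)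
    (u : (Fin n → ℝ) → ℝ)
    (v : Fin n → Fin n → (Fin n → ℝ) → ℝ)
    (c : Fin n → Fin n → Fin n → ℝ)
    (χ : Fin n → Fin n → Fin n → (Fin n → ℝ) → ℝ)
    (uε θε θχε wε zε : ℝ → (Fin n → ℝ) → ℝ)
    -- u solves the homogenized problem, with all derivatives up to order 5 bounded by M
    (hu : ContDiffOn ℝ 5 u Ω)
    (hueq : ∀ x ∈ Ω, -(∑ i, ∑ j, Abar i j * pd i (pd j u) x) = f x)
    (hubd : ∀ x ∈ Ω, ∀ i j k l d : Fin n,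
      |u x| ≤ M ∧ |pd i u x| ≤ M ∧ |pd i (pd j u) x| ≤ M ∧
      |pd i (pd j (pd k u)) x| ≤ M ∧ |pd i (pd j (pd k (pd l u))) x| ≤ M ∧
      |pd i (pd j (pd k (pd l (pd d u)))) x| ≤ M)
    -- correctors v^{kl}
    (hv : ∀ k l, ContDiff ℝ 2 (v k l))
    (hveq : ∀ k l, ∀ y : Fin n → ℝ,
      -(∑ i, ∑ j, A y i j * pd i (pd j (v k l)) y) = A y k l - Abar k l)
    (hvbd : ∀ k l, ∀ y : Fin n → ℝ, |v k l y| + gradNorm (v k l) y ≤ M)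
    -- correctors χ^{jkl}
    (hχ : ∀ j k l, ContDiff ℝ 2 (χ j k l))
    (hχeq : ∀ j k l, ∀ y : Fin n → ℝ,
      -(∑ i, ∑ i', A y i i' * pd i (pd i' (χ j k l)) y)
        = (∑ i, A y i j * pd i (v k l) y) - c j k l)
    (hχbd : ∀ j k l, ∀ y : Fin n → ℝ, |χ j k l y| + gradNorm (χ j k l) y ≤ M)
    -- the ε-problems
    (huε : ∀ ε ∈ Set.Ioc (0:ℝ) 1, TwiceDiffOn (uε ε) Ω)
    (huεeq : ∀ ε ∈ Set.Ioc (0:ℝ) 1, ∀ x ∈ Ω,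
      -(∑ i, ∑ j, A (ε⁻¹ • x) i j * pd i (pd j (uε ε)) x) = f x)
    (hθ : ∀ ε ∈ Set.Ioc (0:ℝ) 1, TwiceDiffOn (θε ε) Ω)
    (hθeq : ∀ ε ∈ Set.Ioc (0:ℝ) 1, ∀ x ∈ Ω,
      (∑ i, ∑ j, A (ε⁻¹ • x) i j * pd i (pd j (θε ε)) x) = 0)
    (hθχ : ∀ ε ∈ Set.Ioc (0:ℝ) 1, TwiceDiffOn (θχε ε) Ω)
    (hθχeq : ∀ ε ∈ Set.Ioc (0:ℝ) 1, ∀ x ∈ Ω,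
      (∑ i, ∑ j, A (ε⁻¹ • x) i j * pd i (pd j (θχε ε)) x) = 0)
    (hw : ∀ ε ∈ Set.Ioc (0:ℝ) 1, TwiceDiffOn (wε ε) Ω)
    (hweq : ∀ ε ∈ Set.Ioc (0:ℝ) 1, ∀ x ∈ Ω,
      -(∑ i, ∑ j, A (ε⁻¹ • x) i j * pd i (pd j (wε ε)) x)
        = ∑ i, ∑ j, ∑ k, ∑ l,
            A (ε⁻¹ • x) i j * pd i (v k l) (ε⁻¹ • x) * pd j (pd k (pd l u)) x)
    (hz : ∀ ε ∈ Set.Ioc (0:ℝ) 1, TwiceDiffOn (zε ε) Ω)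
    (hzeq : ∀ ε ∈ Set.Ioc (0:ℝ) 1, ∀ x ∈ Ω,
      -(∑ i, ∑ j, A (ε⁻¹ • x) i j * pd i (pd j (zε ε)) x)
        = -(∑ j, ∑ k, ∑ l, c j k l * pd j (pd k (pd l u)) x))
    -- the uniform interior (Avellaneda–Lin) estimate
    (hAL : ∀ ε ∈ Set.Ioc (0:ℝ) 1, ∀ w : (Fin n → ℝ) → ℝ,
      TwiceDiffOn w Ω → ContinuousOn w (closure Ω) →
      (∀ x ∈ frontier Ω, w x = 0) →
      ∀ x ∈ Ω, |w x| + gradNorm w x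
        ≤ C₀ * lpNorm q Ω (fun y => ∑ i, ∑ j, A (ε⁻¹ • y) i j * pd i (pd j w) y))
    -- the two corrected functions extend continuously to the closure and vanish on ∂Ω
    (hbc₁ : ∀ ε ∈ Set.Ioc (0:ℝ) 1,
      ContinuousOn (fun x => uε ε x - u x -
        ε ^ 2 * ((∑ k, ∑ l, v k l (ε⁻¹ • x) * pd k (pd l u) x) + θε ε x)
        - 2 * ε * wε ε x) (closure Ω) ∧
      ∀ x ∈ frontier Ω, uε ε x - u x -
        ε ^ 2 * ((∑ k, ∑ l, v k l (ε⁻¹ • x) * pd k (pd l u) x) + θε ε x)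
        - 2 * ε * wε ε x = 0)
    (hbc₂ : ∀ ε ∈ Set.Ioc (0:ℝ) 1,
      ContinuousOn (fun x => wε ε x + zε ε x -
        ε ^ 2 * ((∑ j, ∑ k, ∑ l, χ j k l (ε⁻¹ • x) * pd j (pd k (pd l u)) x)
          + θχε ε x)) (closure Ω) ∧
      ∀ x ∈ frontier Ω, wε ε x + zε ε x -
        ε ^ 2 * ((∑ j, ∑ k, ∑ l, χ j k l (ε⁻¹ • x) * pd j (pd k (pd l u)) x)
          + θχε ε x) = 0) :
    ∃ C > 0, ∃ ε₀ ∈ Set.Ioc (0:ℝ) 1, ∀ ε ∈ Set.Ioo (0:ℝ) ε₀, ∀ x ∈ Ω,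
      |uε ε x - u x + 2 * ε * zε ε x
          - ε ^ 2 * (∑ k, ∑ l, v k l (ε⁻¹ • x) * pd k (pd l u) x)
          - ε ^ 2 * θε ε x - 2 * ε ^ 3 * θχε ε x|
        + gradNorm (fun y => uε ε y - u y + 2 * ε * zε ε y
          - ε ^ 2 * (∑ k, ∑ l, v k l (ε⁻¹ • y) * pd k (pd l u) y)
          - ε ^ 2 * θε ε y - 2 * ε ^ 3 * θχε ε y) x
        ≤ C * ε ^ 2 :=
  W1infty_key_estimate_general q M C₀ hq hM hC₀ Ω hΩb hΩo A hAsymm hAbd Abar f u v c χ uε θε θχε wε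
    zε hu hueq hubd hv hveq hvbd hχ hχeq hχbd huε huεeq hθ hθeq hθχ hθχeq hw hweq hz hzeq hAL hbc₁
    hbc₂
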